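/- Let k₀ ∈ L²([0,1]²) be a real stochastic kernel with k₀ ≥ l a.e. on [0,1]² for some 0 < l < 1 (so F_l = [0,1]² up to measure zero), whose integral operator L₀ on L²([0,1]) satisfies the mixing condition (A1). Let λ₀ ∈ ℝ, λ₀ ≠ 0, and let e, ê ∈ L²([0,1]) be real-valued with L₀ e = λ₀ e and L₀ᵀ ê = λ₀ ê, where L₀ᵀ is the integral operator with kernel (x,y) ↦ k₀(y,x). Set E(x,y) := λ₀ ê(x) e(y) and assume there is a set of y of positive measure on which ∫₀¹ E⁺(x,y) dx > 0 and ∫₀¹ E⁻(x,y) dx > 0. Then the unique minimizer of k ↦ ∫₀¹∫₀¹ k(x,y) E(x,y) dx dy over {k ∈ V_ker : ‖k‖_{L²([0,1]²)} = 1} is k̇(x,y) = sgn(λ₀) · (e(y)/‖e‖₂) · ( (∫₀¹ ê dm) − ê(x) ) / ‖(∫₀¹ ê dm)·𝟙 − ê‖₂. -/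

import Mathlib

/-!
On the unit sphere of `V_ker` the objective is linear, so everything hinges on writing it as an
inner product with an element of `V_ker`. Subtracting from `E(x,y) = λ ê(x) e(y)` the
column-constant `λ c e(y)`, `c = ∫ ê`, does not change the objective on `V_ker` and turns `E` into
`-s (u ⊗ v)` with `u = (c - ê)/‖c - ê‖₂`, `v = sgn(λ) e/‖e‖₂` and `s = |λ| ‖c - ê‖₂ ‖e‖₂ > 0`.
Since `∫ u = 0`, the unit vector `u ⊗ v` lies in `V_ker`, and Cauchy–Schwarz together with its
equality case shows that it is the unique minimiser of `-s ⟪·, u ⊗ v⟫` on the unit sphere.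
The sign conditions on `E⁺` and `E⁻` at a point of `S` prevent `ê` from being a.e. constant, and
since `S` has positive measure they also force `e ≠ 0`; hence `s > 0`.
-/

open MeasureTheory

/-- Lebesgue measure restricted to the unit interval `[0,1]`. -/
noncomputable def μ01 : Measure ℝ := volume.restrict (Set.Icc (0 : ℝ) 1)

/-- Two-dimensional Lebesgue measure restricted to the unit square `[0,1]²`. -/
noncomputable def ν01 : Measure (ℝ × ℝ) := μ01.prod μ01

/-- The feasible set `{k ∈ V_ker : ‖k‖₂ = 1}`. -/
def feasVker : Set (Lp ℝ 2 ν01) :=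
  {k : Lp ℝ 2 ν01 | (∀ᵐ y ∂μ01, ∫ x, k (x, y) ∂μ01 = 0) ∧ ‖k‖ = 1}

/-- The objective `k ↦ ∫∫ k(x,y) E(x,y) dx dy`. -/
noncomputable def JobjE (E : ℝ × ℝ → ℝ) (k : Lp ℝ 2 ν01) : ℝ :=
  ∫ y, (∫ x, k (x, y) * E (x, y) ∂μ01) ∂μ01


open scoped ENNReal InnerProductSpace

theorem Real.sign_mul_abs (r : ℝ) : Real.sign r * |r| = r := by
  rcases lt_trichotomy r 0 with h | rfl | h
  · simp [Real.sign_of_neg h, abs_of_neg h]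
  · simp
  · simp [Real.sign_of_pos h, abs_of_pos h]

section InnerMinimizer

variable {E : Type*} [NormedAddCommGroup E] [InnerProductSpace ℝ E] {F : Set E} {w : E}
  {J : E → ℝ} {s : ℝ}

theorem isMinOn_of_eq_neg_mul_inner (hF : ∀ k ∈ F, ‖k‖ = 1) (hw : w ∈ F) (hs : 0 < s)
    (hJ : ∀ k ∈ F, J k = -s * ⟪k, w⟫_ℝ) : IsMinOn J F w := by
  refine isMinOn_iff.2 fun k hk => ?_
  have hle : ⟪k, w⟫_ℝ ≤ 1 := by simpa [hF k hk, hF w hw] using real_inner_le_norm k w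
  rw [hJ w hw, hJ k hk, real_inner_self_eq_norm_sq, hF w hw]
  nlinarith

theorem eq_of_isMinOn_of_eq_neg_mul_inner (hF : ∀ k ∈ F, ‖k‖ = 1) (hw : w ∈ F) (hs : 0 < s)
    (hJ : ∀ k ∈ F, J k = -s * ⟪k, w⟫_ℝ) {k : E} (hk : k ∈ F) (hmin : IsMinOn J F k) :
    k = w := by
  have hle : ⟪k, w⟫_ℝ ≤ 1 := by simpa [hF k hk, hF w hw] using real_inner_le_norm k w
  refine (inner_eq_one_iff_of_norm_eq_one (hF k hk) (hF w hw)).1 (le_antisymm hle ?_)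
  have := isMinOn_iff.1 hmin w hw
  rw [hJ w hw, hJ k hk, real_inner_self_eq_norm_sq, hF w hw] at this
  nlinarith

end InnerMinimizer

namespace MeasureTheory

variable {α β : Type*} [MeasurableSpace α] [MeasurableSpace β] {μ : Measure α} {ν : Measure β}

section Lp

variable {p : ℝ≥0∞}

theorem eLpNorm_toReal_inv_smul_self {E : Type*} [NormedAddCommGroup E] [NormedSpace ℝ E]
    {f : α → E} (hf : MemLp f p μ) (h0 : eLpNorm f p μ ≠ 0) :
    eLpNorm ((eLpNorm f p μ).toReal⁻¹ • f) p μ = 1 := by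
  rw [eLpNorm_const_smul, Real.enorm_eq_ofReal_abs, abs_inv, ENNReal.abs_toReal,
    ENNReal.ofReal_inv_of_pos (ENNReal.toReal_pos h0 hf.2.ne), ENNReal.ofReal_toReal hf.2.ne,
    ENNReal.inv_mul_cancel h0 hf.2.ne]

theorem eLpNorm_ne_zero_of_ne_zero_on {E : Type*} [NormedAddCommGroup E] {f : α → E}
    (hf : AEStronglyMeasurable f μ) (hp : p ≠ 0) {S : Set α} (hS : μ S ≠ 0)
    (hfS : ∀ x ∈ S, f x ≠ 0) : eLpNorm f p μ ≠ 0 := by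
  rw [Ne, eLpNorm_eq_zero_iff hf hp]
  intro hf0
  obtain ⟨x, hxS, hx⟩ := Measure.exists_mem_of_measure_ne_zero_of_ae hS (ae_restrict_of_ae hf0)
  exact hfS x hxS hx

theorem not_ae_eq_const_of_integral_posPart_pos {f : α → ℝ} (hpos : 0 < ∫ x, max (f x) 0 ∂μ)
    (hneg : 0 < ∫ x, max (-f x) 0 ∂μ) (a : ℝ) : ¬ f =ᵐ[μ] fun _ => a := by
  intro hf
  rw [integral_congr_ae (hf.mono fun x hx => congrArg (max · 0) hx), integral_const] at hpos
  rw [integral_congr_ae (hf.mono fun x hx => congrArg (fun t => max (-t) 0) hx),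
    integral_const] at hneg
  rcases le_total a 0 with ha | ha
  · simp [max_eq_right ha] at hpos
  · simp [max_eq_right (neg_nonpos.2 ha)] at hneg

theorem eLpNorm_const_sub_ne_zero_of_integral_posPart_pos {f : α → ℝ}
    (hf : AEStronglyMeasurable f μ) (hp : p ≠ 0) {a b : ℝ}
    (hpos : 0 < ∫ x, max (a * f x * b) 0 ∂μ) (hneg : 0 < ∫ x, max (-(a * f x * b)) 0 ∂μ)
    (c : ℝ) : eLpNorm (fun x => c - f x) p μ ≠ 0 := by
  rw [Ne, eLpNorm_eq_zero_iff (f := fun x => c - f x) (aestronglyMeasurable_const.sub hf) hp]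
  exact fun h0 => not_ae_eq_const_of_integral_posPart_pos hpos hneg (a * c * b) <|
    h0.mono fun x hx => by simp [sub_eq_zero.1 hx]

variable [SFinite ν] {𝕜 : Type*} [NormedRing 𝕜] [NormMulClass 𝕜] {A : α → 𝕜} {B : β → 𝕜}

theorem eLpNorm_mul_prod (hp0 : p ≠ 0) (hp : p ≠ ∞) (hA : AEStronglyMeasurable A μ)
    (hB : AEStronglyMeasurable B ν) :
    eLpNorm (fun z : α × β => A z.1 * B z.2) p (μ.prod ν) = eLpNorm A p μ * eLpNorm B p ν := by
  simp only [eLpNorm_eq_lintegral_rpow_enorm_toReal hp0 hp, enorm_mul,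
    ENNReal.mul_rpow_of_nonneg _ _ ENNReal.toReal_nonneg]
  rw [lintegral_prod_mul (hA.enorm.pow_const _) (hB.enorm.pow_const _),
    ENNReal.mul_rpow_of_nonneg _ _ (by positivity)]

theorem MemLp.mul_prod (hp0 : p ≠ 0) (hp : p ≠ ∞) (hA : MemLp A p μ) (hB : MemLp B p ν) :
    MemLp (fun z : α × β => A z.1 * B z.2) p (μ.prod ν) :=
  ⟨hA.1.comp_fst.mul hB.1.comp_snd, by
    rw [eLpNorm_mul_prod hp0 hp hA.1 hB.1]; exact ENNReal.mul_lt_top hA.2 hB.2⟩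

end Lp

theorem ae_ae_swap_of_ae_prod [SFinite μ] [SFinite ν] {P : α × β → Prop}
    (h : ∀ᵐ z ∂μ.prod ν, P z) : ∀ᵐ y ∂ν, ∀ᵐ x ∂μ, P (x, y) :=
  Measure.ae_ae_of_ae_prod (Measure.measurePreserving_swap.quasiMeasurePreserving.ae h)

theorem ae_integral_slice_eq_of_ae_eq_mul_prod [SFinite μ] [SFinite ν]
    {K : α × β → ℝ} {A : α → ℝ} {B : β → ℝ} (hK : K =ᵐ[μ.prod ν] fun z => A z.1 * B z.2) :
    ∀ᵐ y ∂ν, ∫ x, K (x, y) ∂μ = (∫ x, A x ∂μ) * B y := by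
  filter_upwards [ae_ae_swap_of_ae_prod hK] with y hy
  rw [integral_congr_ae hy, integral_mul_const]

end MeasureTheory

instance : IsProbabilityMeasure μ01 :=
  ⟨by simp [μ01]⟩

instance : IsProbabilityMeasure ν01 :=
  inferInstanceAs (IsProbabilityMeasure (μ01.prod μ01))

theorem μ01_apply_of_subset {S : Set ℝ} (hS : S ⊆ Set.Icc 0 1) : μ01 S = volume S := by
  rw [μ01, Measure.restrict_apply' measurableSet_Icc, Set.inter_eq_left.mpr hS]

theorem exists_mem_feasVker_ae_eq_mul_prod {u v : ℝ → ℝ} (hu : MemLp u 2 μ01)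
    (hv : MemLp v 2 μ01) (hu1 : eLpNorm u 2 μ01 = 1) (hv1 : eLpNorm v 2 μ01 = 1)
    (hu0 : ∫ x, u x ∂μ01 = 0) : ∃ K ∈ feasVker, K =ᵐ[ν01] fun p => u p.1 * v p.2 := by
  have huv : MemLp (fun p : ℝ × ℝ => u p.1 * v p.2) 2 ν01 :=
    hu.mul_prod two_ne_zero ENNReal.ofNat_ne_top hv
  refine ⟨huv.toLp _, ⟨?_, ?_⟩, huv.coeFn_toLp⟩
  · filter_upwards [ae_integral_slice_eq_of_ae_eq_mul_prod huv.coeFn_toLp] with y hy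
    rw [hy, hu0, zero_mul]
  · rw [Lp.norm_toLp, ν01, eLpNorm_mul_prod two_ne_zero ENNReal.ofNat_ne_top hu.1 hv.1, hu1, hv1,
      mul_one, ENNReal.toReal_one]

theorem JobjE_eq_integral {E : ℝ × ℝ → ℝ} {k : Lp ℝ 2 ν01}
    (h : Integrable (fun p => k p * E p) ν01) : JobjE E k = ∫ p, k p * E p ∂ν01 :=
  (integral_integral_swap h).symm.trans (integral_prod _ h).symm

theorem JobjE_add_of_integral_slice_eq_zero {E : ℝ × ℝ → ℝ} {k : Lp ℝ 2 ν01}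
    (hk : ∀ᵐ y ∂μ01, ∫ x, k (x, y) ∂μ01 = 0) (hkE : Integrable (fun p => k p * E p) ν01)
    (g : ℝ → ℝ) : JobjE (fun p => E p + g p.2) k = JobjE E k := by
  have hk1 : Integrable (fun p => k p) ν01 := (Lp.memLp k).integrable one_le_two
  refine integral_congr_ae ?_
  filter_upwards [hk, hkE.prod_left_ae, hk1.prod_left_ae] with y hy hkEy hky
  simp only [mul_add]
  rw [integral_add hkEy (hky.mul_const _), integral_mul_const, hy, zero_mul, add_zero]

theorem JobjE_eq_neg_mul_inner {E : ℝ × ℝ → ℝ} {u v g : ℝ → ℝ} {s : ℝ} {k K : Lp ℝ 2 ν01}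
    (hk : ∀ᵐ y ∂μ01, ∫ x, k (x, y) ∂μ01 = 0) (hK : K =ᵐ[ν01] fun p => u p.1 * v p.2)
    (hE : ∀ p, E p = -s * (u p.1 * v p.2) + g p.2) : JobjE E k = -s * ⟪k, K⟫_ℝ := by
  have hint : Integrable (fun p => k p * (-s * K p)) ν01 :=
    (L2.integrable_inner (𝕜 := ℝ) k K).const_mul (-s) |>.congr <| ae_of_all _ fun p => by
      simp only [RCLike.inner_apply, conj_trivial]; ring
  have hint' : Integrable (fun p => k p * (-s * (u p.1 * v p.2))) ν01 :=
    hint.congr (hK.mono fun p hp => by simp only [hp])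
  calc JobjE E k = JobjE (fun p => -s * (u p.1 * v p.2)) k := by
        rw [funext hE]; exact JobjE_add_of_integral_slice_eq_zero hk hint' g
    _ = ∫ p, k p * (-s * K p) ∂ν01 :=
        (JobjE_eq_integral hint').trans (integral_congr_ae (hK.mono fun p hp => by simp [hp]))
    _ = -s * ⟪k, K⟫_ℝ := by
        rw [L2.inner_def, ← integral_const_mul]
        refine integral_congr_ae (ae_of_all _ fun p => ?_)
        simp only [RCLike.inner_apply, conj_trivial]
        ring

theorem exists_mem_feasVker_JobjE_eq_neg_mul_inner {lam : ℝ} (hlam : lam ≠ 0)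
    {e ehat : Lp ℝ 2 μ01} (hehat : eLpNorm (fun x => (∫ z, ehat z ∂μ01) - ehat x) 2 μ01 ≠ 0)
    (he : eLpNorm e 2 μ01 ≠ 0) :
    ∃ kdot ∈ feasVker,
      (∀ᵐ p ∂ν01, kdot p =
        Real.sign lam * (e p.2 / ‖e‖) *
          (((∫ z, ehat z ∂μ01) - ehat p.1) /
            (eLpNorm (fun x => (∫ z, ehat z ∂μ01) - ehat x) 2 μ01).toReal)) ∧
      ∃ s > 0, ∀ k ∈ feasVker, JobjE (fun p => lam * ehat p.1 * e p.2) k = -s * ⟪k, kdot⟫_ℝ := by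
  set c := ∫ z, ehat z ∂μ01
  set g : ℝ → ℝ := fun x => c - ehat x
  have hg : MemLp g 2 μ01 := (memLp_const c).sub (Lp.memLp ehat)
  set N := (eLpNorm g 2 μ01).toReal
  set u : ℝ → ℝ := N⁻¹ • g
  set v : ℝ → ℝ := Real.sign lam • (‖e‖⁻¹ • ⇑e)
  have hv1 : eLpNorm v 2 μ01 = 1 := by
    rw [eLpNorm_const_smul, Lp.norm_def, eLpNorm_toReal_inv_smul_self (Lp.memLp e) he, mul_one]
    rcases Real.sign_apply_eq_of_ne_zero lam hlam with h | h <;> simp [h]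
  have hu0 : ∫ x, u x ∂μ01 = 0 := by
    simp only [u, g, c, Pi.smul_apply, smul_eq_mul]
    rw [integral_const_mul, integral_sub (integrable_const _) ((Lp.memLp ehat).integrable one_le_two)]
    simp
  obtain ⟨kdot, hkdot_feas, hkdot⟩ := exists_mem_feasVker_ae_eq_mul_prod (u := u) (v := v)
    (hg.const_smul _) (((Lp.memLp e).const_smul _).const_smul _)
    (eLpNorm_toReal_inv_smul_self hg hehat) hv1 hu0
  have hN : 0 < N := ENNReal.toReal_pos hehat hg.2.ne
  have he : 0 < ‖e‖ := ENNReal.toReal_pos he (Lp.memLp e).2.ne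
  refine ⟨kdot, hkdot_feas, hkdot.mono fun p hp => ?_, |lam| * N * ‖e‖, by positivity,
    fun k hk => JobjE_eq_neg_mul_inner hk.1 hkdot (g := fun y => lam * c * e y) fun p => ?_⟩
  · rw [hp]
    simp only [u, v, g, Pi.smul_apply, smul_eq_mul]
    ring
  · simp only [u, v, g, Pi.smul_apply, smul_eq_mul]
    linear_combination (c - ehat p.1) * e p.2 * (Real.sign lam * |lam| * (‖e‖ * ‖e‖⁻¹) *
      mul_inv_cancel₀ hN.ne' + Real.sign lam * |lam| * mul_inv_cancel₀ he.ne' +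
      Real.sign_mul_abs lam)

theorem optimal_kernel_perturbation_for_mixing_real_eigenvalue_general
    (lam : ℝ) (hlam : lam ≠ 0)
    (e ehat : Lp ℝ 2 μ01)
    (S : Set ℝ) (hS : S ⊆ Set.Icc (0 : ℝ) 1) (hSpos : 0 < volume S)
    (hEpos : ∀ y ∈ S, 0 < ∫ x, max (lam * ehat x * e y) 0 ∂μ01)
    (hEneg : ∀ y ∈ S, 0 < ∫ x, max (-(lam * ehat x * e y)) 0 ∂μ01) :
    ∃ kdot : Lp ℝ 2 ν01,
      (∀ᵐ p ∂ν01, kdot p =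
        Real.sign lam * (e p.2 / ‖e‖) *
          (((∫ z, ehat z ∂μ01) - ehat p.1) /
            (eLpNorm (fun x => (∫ z, ehat z ∂μ01) - ehat x) 2 μ01).toReal)) ∧
      kdot ∈ feasVker ∧
      (∀ k ∈ feasVker,
        JobjE (fun p => lam * ehat p.1 * e p.2) kdot ≤
          JobjE (fun p => lam * ehat p.1 * e p.2) k) ∧
      (∀ k ∈ feasVker,
        (∀ k' ∈ feasVker,
          JobjE (fun p => lam * ehat p.1 * e p.2) k ≤
            JobjE (fun p => lam * ehat p.1 * e p.2) k') →
        k = kdot) := by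
  have hμS : μ01 S ≠ 0 := (μ01_apply_of_subset hS).symm ▸ hSpos.ne'
  obtain ⟨y, hy⟩ := nonempty_of_measure_ne_zero hμS
  have hehat := eLpNorm_const_sub_ne_zero_of_integral_posPart_pos
    (Lp.aestronglyMeasurable ehat) two_ne_zero (hEpos y hy) (hEneg y hy) (∫ z, ehat z ∂μ01)
  have he : eLpNorm e 2 μ01 ≠ 0 := eLpNorm_ne_zero_of_ne_zero_on (Lp.aestronglyMeasurable e)
    two_ne_zero hμS fun y hy he => by simpa [he] using hEpos y hy
  obtain ⟨kdot, hfeas, hkdot, s, hs, hJ⟩ :=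
    exists_mem_feasVker_JobjE_eq_neg_mul_inner hlam hehat he
  have hunit : ∀ k ∈ feasVker, ‖k‖ = 1 := fun k hk => hk.2
  exact ⟨kdot, hkdot, hfeas, isMinOn_iff.1 (isMinOn_of_eq_neg_mul_inner hunit hfeas hs hJ),
    fun k hk hmin => eq_of_isMinOn_of_eq_neg_mul_inner hunit hfeas hs hJ hk (isMinOn_iff.2 hmin)⟩

/-- When the second eigenvalue `λ₀` is real and the stochastic
kernel satisfies `k₀ ≥ l` a.e., the unique minimizer of `k ↦ ∫∫ k E` over
`{k ∈ V_ker : ‖k‖₂ = 1}` (with `E(x,y) = λ₀ ê(x) e(y)`) is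
`k̇(x,y) = sgn(λ₀) (e(y)/‖e‖₂) ((∫ ê) − ê(x)) / ‖(∫ ê)𝟙 − ê‖₂`. -/
theorem optimal_kernel_perturbation_for_mixing_real_eigenvalue
    (k₀ : ℝ × ℝ → ℝ) (hk₀L2 : MemLp k₀ 2 ν01)
    (hk₀stoch : ∀ᵐ y ∂μ01, ∫ x, k₀ (x, y) ∂μ01 = 1)
    (l : ℝ) (hl0 : 0 < l) (hl1 : l < 1)
    (hk₀ge : ∀ᵐ p ∂ν01, l ≤ k₀ p)
    (L₀ : Lp ℝ 2 μ01 →L[ℝ] Lp ℝ 2 μ01)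
    (hL₀ : ∀ f : Lp ℝ 2 μ01, ∀ᵐ x ∂μ01, (L₀ f) x = ∫ y, k₀ (x, y) * f y ∂μ01)
    (hmix : ∀ g : Lp ℝ 2 μ01, (∫ x, g x ∂μ01) = 0 →
      Filter.Tendsto (fun n : ℕ => ‖(L₀ ^ n) g‖) Filter.atTop (nhds 0))
    (L₀t : Lp ℝ 2 μ01 →L[ℝ] Lp ℝ 2 μ01)
    (hL₀t : ∀ f : Lp ℝ 2 μ01, ∀ᵐ x ∂μ01, (L₀t f) x = ∫ y, k₀ (y, x) * f y ∂μ01)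
    (lam : ℝ) (hlam : lam ≠ 0)
    (e ehat : Lp ℝ 2 μ01)
    (he : L₀ e = lam • e) (hehat : L₀t ehat = lam • ehat)
    (S : Set ℝ) (hS : S ⊆ Set.Icc (0 : ℝ) 1) (hSpos : 0 < volume S)
    (hEpos : ∀ y ∈ S, 0 < ∫ x, max (lam * ehat x * e y) 0 ∂μ01)
    (hEneg : ∀ y ∈ S, 0 < ∫ x, max (-(lam * ehat x * e y)) 0 ∂μ01) :
    ∃ kdot : Lp ℝ 2 ν01,
      (∀ᵐ p ∂ν01, kdot p =
        Real.sign lam * (e p.2 / ‖e‖) *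
          (((∫ z, ehat z ∂μ01) - ehat p.1) /
            (eLpNorm (fun x => (∫ z, ehat z ∂μ01) - ehat x) 2 μ01).toReal)) ∧
      kdot ∈ feasVker ∧
      (∀ k ∈ feasVker,
        JobjE (fun p => lam * ehat p.1 * e p.2) kdot ≤
          JobjE (fun p => lam * ehat p.1 * e p.2) k) ∧
      (∀ k ∈ feasVker,
        (∀ k' ∈ feasVker,
          JobjE (fun p => lam * ehat p.1 * e p.2) k ≤
            JobjE (fun p => lam * ehat p.1 * e p.2) k') →
        k = kdot) :=
  optimal_kernel_perturbation_for_mixing_real_eigenvalue_general lam hlam e ehat S hS hSpos hEpos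
    hEneg
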